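/- arXiv:2211.12833 — 5 statements merged into one kernel-verified Lean document; each statement's English description precedes it below -/
import Mathlib

section
/- Let G be a graph and let G' be obtained from G by adding a set U of new vertices, arbitrary edges between V(G) and U, and for each u ∈ U a new pendant twin vertex u' adjacent only to u (in particular no edges inside U). Then the maximum matching size of G' equals the maximum matching size of G plus |U|. -/
open scoped Classical

variable {V U : Type*}

/-- The graph obtained from `G` by adding a layer `U` of new vertices, edges between
`V(G)` and `U` (vertex `u ∈ U` is joined to the vertices in `B u`), and for each `u ∈ U`
a pendant twin vertex adjacent only to `u`.  The vertex type is `V ⊕ U ⊕ U`, where the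
first `U`-summand is the layer and the second consists of the twins. -/
def addLayerWithTwins (G : SimpleGraph V) (B : U → Finset V) :
    SimpleGraph (V ⊕ U ⊕ U) where
  Adj x y :=
    match x, y with
    | Sum.inl v, Sum.inl w => G.Adj v w
    | Sum.inl v, Sum.inr (Sum.inl u) => v ∈ B u
    | Sum.inr (Sum.inl u), Sum.inl v => v ∈ B u
    | Sum.inr (Sum.inl u), Sum.inr (Sum.inr u') => u = u'
    | Sum.inr (Sum.inr u'), Sum.inr (Sum.inl u) => u = u'
    | _, _ => False
  symm := by
    constructor
    rintro (v | u | u) (w | w' | w') h <;>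
      first | exact G.adj_symm h | exact h | exact h.symm | exact h.elim
  loopless := by
    constructor
    rintro (v | u | u) h
    · exact G.irrefl h
    · exact h
    · exact h

/-- Maximum cardinality of a matching. -/
noncomputable def MCM {W : Type*} (G : SimpleGraph W) : ℕ :=
  sSup { n : ℕ | ∃ M : G.Subgraph, M.IsMatching ∧ M.edgeSet.ncard = n }

/-!
Given a maximum matching of `G`, adding all twin edges `{u, u'}` gives a matching of the
layered graph with `|U|` more edges. Conversely, as `U` is independent and each twin is adjacent
only to its partner in `U`, every edge outside `G` meets `U`: a matching has at most `|U|` such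
edges, and its remaining edges form a matching of `G`.
-/

namespace SimpleGraph.Subgraph

variable {W : Type*} {G : SimpleGraph W}

lemma bddAbove_matching_sizes [Finite W] (G : SimpleGraph W) :
    BddAbove {n | ∃ M : G.Subgraph, M.IsMatching ∧ M.edgeSet.ncard = n} :=
  ⟨Nat.card (Sym2 W), by rintro _ ⟨M, -, rfl⟩; exact Set.ncard_le_card _⟩

lemma IsMatching.ncard_edgeSet_le_MCM [Finite W] {M : G.Subgraph} (hM : M.IsMatching) :
    M.edgeSet.ncard ≤ MCM G :=
  le_csSup (bddAbove_matching_sizes G) ⟨M, hM, rfl⟩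

lemma exists_isMatching_ncard_edgeSet_eq_MCM [Finite W] (G : SimpleGraph W) :
    ∃ M : G.Subgraph, M.IsMatching ∧ M.edgeSet.ncard = MCM G :=
  Nat.sSup_mem (s := {n | ∃ M : G.Subgraph, M.IsMatching ∧ M.edgeSet.ncard = n})
    ⟨0, ⊥, by simp [IsMatching]⟩ (bddAbove_matching_sizes G)

lemma edgeSet_induce_support (H : G.Subgraph) : (H.induce H.support).edgeSet = H.edgeSet := by
  ext e
  induction e with
  | _ v w => exact ⟨fun h => h.2.2, fun h => ⟨⟨w, h⟩, ⟨v, h.symm⟩, h⟩⟩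

lemma isMatching_induce_support {H : G.Subgraph}
    (h : ∀ ⦃u v w⦄, H.Adj u v → H.Adj u w → v = w) : (H.induce H.support).IsMatching := by
  rintro v ⟨w, hvw⟩
  exact ⟨w, ⟨⟨w, hvw⟩, ⟨v, hvw.symm⟩, hvw⟩, fun w' hvw' => h hvw'.2.2 hvw⟩

lemma ncard_edgeSet_le_MCM [Finite W] {H : G.Subgraph}
    (h : ∀ ⦃u v w⦄, H.Adj u v → H.Adj u w → v = w) : H.edgeSet.ncard ≤ MCM G :=
  edgeSet_induce_support H ▸ (isMatching_induce_support h).ncard_edgeSet_le_MCM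

lemma IsMatching.eq_of_mem_of_mem {M : G.Subgraph} (hM : M.IsMatching) {e e' : Sym2 W}
    (he : e ∈ M.edgeSet) (he' : e' ∈ M.edgeSet) {x : W} (hx : x ∈ e) (hx' : x ∈ e') :
    e = e' := by
  obtain ⟨y, rfl⟩ := Sym2.mem_iff_exists.mp hx
  obtain ⟨y', rfl⟩ := Sym2.mem_iff_exists.mp hx'
  rw [hM.eq_of_adj_left (M.mem_edgeSet.mp he) (M.mem_edgeSet.mp he')]

lemma IsMatching.ncard_edges_meeting_le [Finite W] {M : G.Subgraph} (hM : M.IsMatching)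
    (S : Set W) : {e ∈ M.edgeSet | ∃ x ∈ S, x ∈ e}.ncard ≤ S.ncard := by
  let pick (e : {e ∈ M.edgeSet | ∃ x ∈ S, x ∈ e}) : S :=
    ⟨e.2.2.choose, e.2.2.choose_spec.1⟩
  refine Nat.card_le_card_of_injective pick fun e e' h => Subtype.ext ?_
  have hx' : e.2.2.choose ∈ (e' : Sym2 W) := by
    rw [show e.2.2.choose = e'.2.2.choose from congrArg Subtype.val h]
    exact e'.2.2.choose_spec.2
  exact hM.eq_of_mem_of_mem e.2.1 e'.2.1 e.2.2.choose_spec.2 hx'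

lemma disjoint_edgeSet_of_disjoint_support {H H' : G.Subgraph}
    (h : Disjoint H.support H'.support) : Disjoint H.edgeSet H'.edgeSet := by
  rw [Set.disjoint_left]
  intro e
  induction e with
  | _ v w => exact fun hvw hvw' => h.ne_of_mem ⟨w, hvw⟩ ⟨w, hvw'⟩ rfl

end SimpleGraph.Subgraph

open SimpleGraph.Subgraph

namespace addLayerWithTwins

variable (G : SimpleGraph V) (B : U → Finset V)

def inlHom : G →g addLayerWithTwins G B := ⟨Sum.inl, id⟩

lemma inlHom_injective : Function.Injective (inlHom G B) :=
  Sum.inl_injective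

lemma twin_adj (u : U) :
    (addLayerWithTwins G B).Adj (Sum.inr (Sum.inl u)) (Sum.inr (Sum.inr u)) :=
  rfl

def twinMatching : (addLayerWithTwins G B).Subgraph :=
  ⨆ u, (addLayerWithTwins G B).subgraphOfAdj (twin_adj G B u)

lemma twinMatching_isMatching : (twinMatching G B).IsMatching :=
  IsMatching.iSup (fun _ => IsMatching.subgraphOfAdj _) fun u u' hne =>
    Set.disjoint_of_subset (support_subset_verts _) (support_subset_verts _) (by simp [hne.symm])

lemma support_twinMatching_subset : (twinMatching G B).support ⊆ Set.range Sum.inr := by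
  refine (support_subset_verts _).trans ?_
  simp [twinMatching, verts_iSup, Set.iUnion_subset_iff, Set.insert_subset_iff]

lemma ncard_edgeSet_twinMatching [Finite U] : (twinMatching G B).edgeSet.ncard = Nat.card U := by
  simp only [twinMatching, edgeSet_iSup, SimpleGraph.edgeSet_subgraphOfAdj,
    Set.iUnion_singleton_eq_range]
  exact Set.ncard_range_of_injective fun u u' h => by simpa using h

lemma add_card_le_MCM [Finite V] [Finite U] :
    MCM G + Nat.card U ≤ MCM (addLayerWithTwins G B) := by
  obtain ⟨M, hM, hcard⟩ := exists_isMatching_ncard_edgeSet_eq_MCM G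
  have hdisj : Disjoint (M.map (inlHom G B)).support (twinMatching G B).support :=
    Set.disjoint_of_subset ((support_subset_verts _).trans (Set.image_subset_range _ _))
      (support_twinMatching_subset G B) Set.isCompl_range_inl_range_inr.disjoint
  calc MCM G + Nat.card U
      = (M.map (inlHom G B)).edgeSet.ncard + (twinMatching G B).edgeSet.ncard := by
        rw [edgeSet_map, Set.ncard_image_of_injective _ (Sym2.map.injective (inlHom_injective G B)),
          hcard, ncard_edgeSet_twinMatching]
    _ = (M.map (inlHom G B) ⊔ twinMatching G B).edgeSet.ncard := by
        rw [edgeSet_sup, Set.ncard_union_eq (disjoint_edgeSet_of_disjoint_support hdisj)]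
    _ ≤ MCM (addLayerWithTwins G B) :=
        ((hM.map _ (inlHom_injective G B)).sup (twinMatching_isMatching G B)
          hdisj).ncard_edgeSet_le_MCM

lemma mem_range_map_inl_or_exists_inr_inl_mem {e : Sym2 (V ⊕ U ⊕ U)}
    (he : e ∈ (addLayerWithTwins G B).edgeSet) :
    e ∈ Set.range (Sym2.map Sum.inl) ∨ ∃ u : U, Sum.inr (Sum.inl u) ∈ e := by
  induction e with
  | _ x y =>
    rcases x with v | u | u <;> rcases y with w | w | w <;>
      first | exact Or.inl ⟨s(_, _), rfl⟩ | simp_all [addLayerWithTwins]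

lemma MCM_le_add_card [Finite V] [Finite U] :
    MCM (addLayerWithTwins G B) ≤ MCM G + Nat.card U := by
  obtain ⟨M, hM, hcard⟩ := exists_isMatching_ncard_edgeSet_eq_MCM (addLayerWithTwins G B)
  let layer : Set (V ⊕ U ⊕ U) := Set.range (Sum.inr ∘ Sum.inl)
  have hsplit : M.edgeSet ⊆ Sym2.map Sum.inl '' (M.comap (inlHom G B)).edgeSet ∪
      {e ∈ M.edgeSet | ∃ x ∈ layer, x ∈ e} := by
    intro e he
    rcases mem_range_map_inl_or_exists_inr_inl_mem G B (M.edgeSet_subset he) with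
      ⟨e', rfl⟩ | ⟨u, hu⟩
    · induction e' with
      | _ v w => exact Or.inl ⟨s(v, w), ⟨M.adj_sub he, he⟩, rfl⟩
    · exact Or.inr ⟨he, _, ⟨u, rfl⟩, hu⟩
  have hG : (M.comap (inlHom G B)).edgeSet.ncard ≤ MCM G :=
    ncard_edgeSet_le_MCM fun _ _ _ hv hw => inlHom_injective G B (hM.eq_of_adj_left hv.2 hw.2)
  have hlayer : layer.ncard = Nat.card U :=
    Set.ncard_range_of_injective (Sum.inr_injective.comp Sum.inl_injective)
  calc MCM (addLayerWithTwins G B) = M.edgeSet.ncard := hcard.symm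
    _ ≤ (Sym2.map Sum.inl '' (M.comap (inlHom G B)).edgeSet).ncard +
          {e ∈ M.edgeSet | ∃ x ∈ layer, x ∈ e}.ncard :=
        (Set.ncard_le_ncard hsplit).trans (Set.ncard_union_le _ _)
    _ ≤ MCM G + Nat.card U :=
        add_le_add ((Set.ncard_image_le (Set.toFinite _)).trans hG)
          (hlayer ▸ hM.ncard_edges_meeting_le layer)

end addLayerWithTwins

/-- Adding a layer `U` with arbitrary edges to `V(G)` plus a pendant twin for each
vertex of `U` increases the maximum matching size by exactly `|U|`. -/
theorem MCM_addLayerWithTwins [Fintype V] [Fintype U]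
    (G : SimpleGraph V) (B : U → Finset V) :
    MCM (addLayerWithTwins G B) = MCM G + Fintype.card U := by
  rw [← Nat.card_eq_fintype_card]
  exact (addLayerWithTwins.MCM_le_add_card G B).antisymm (addLayerWithTwins.add_card_le_MCM G B)
end

section
/- Let G be a graph and let G' be obtained from G by adding a set U of new vertices, arbitrary edges between V(G) and U, and for each u ∈ U a new pendant twin vertex u' adjacent only to u (no edges inside U). Then the minimum vertex cover size of G' equals the minimum vertex cover size of G plus |U|. -/
open scoped Classical

variable {V U : Type*}

/-- A vertex cover: a set of vertices meeting every edge. -/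
def IsVertexCover {W : Type*} (G : SimpleGraph W) (C : Set W) : Prop :=
  ∀ ⦃a b : W⦄, G.Adj a b → a ∈ C ∨ b ∈ C

/-- Minimum cardinality of a vertex cover. -/
noncomputable def MVC {W : Type*} (G : SimpleGraph W) : ℕ :=
  sInf { n : ℕ | ∃ C : Set W, IsVertexCover G C ∧ C.ncard = n }

/-!
Every new edge of `G'` has an endpoint in the layer `U`, so a minimum cover of `G` together
with `U` covers `G'`. Conversely, a cover of `G'` restricts to a cover of `G` on `V(G)` and,
outside `V(G)`, must contain an endpoint of each of the `|U|` disjoint pendant edges `{u, u'}`.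
-/

theorem Set.ncard_preimage_inl_add_ncard_preimage_inr {α β : Type*} {s : Set (α ⊕ β)}
    (hs : s.Finite) : (Sum.inl ⁻¹' s).ncard + (Sum.inr ⁻¹' s).ncard = s.ncard := by
  have hdecomp : s = Sum.inl '' (Sum.inl ⁻¹' s) ∪ Sum.inr '' (Sum.inr ⁻¹' s) := by
    ext (a | b) <;> simp
  have hdisj : Disjoint (Sum.inl '' (Sum.inl ⁻¹' s) : Set (α ⊕ β)) (Sum.inr '' (Sum.inr ⁻¹' s)) :=
    Set.disjoint_left.2 <| by rintro _ ⟨a, -, rfl⟩ ⟨b, -, hb⟩; exact Sum.inr_ne_inl hb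
  conv_rhs => rw [hdecomp]
  rw [Set.ncard_union_eq hdisj ((hs.preimage Sum.inl_injective.injOn).image _)
      ((hs.preimage Sum.inr_injective.injOn).image _),
    Set.ncard_image_of_injective _ Sum.inl_injective,
    Set.ncard_image_of_injective _ Sum.inr_injective]

theorem nat_card_le_ncard_of_forall_inl_mem_or_inr_mem {U : Type*} [Finite U]
    {s : Set (U ⊕ U)} (h : ∀ u, Sum.inl u ∈ s ∨ Sum.inr u ∈ s) : Nat.card U ≤ s.ncard := by
  have hcover : Sum.inl ⁻¹' s ∪ Sum.inr ⁻¹' s = Set.univ := Set.eq_univ_of_forall h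
  calc Nat.card U = (Sum.inl ⁻¹' s ∪ Sum.inr ⁻¹' s).ncard := by rw [hcover, Set.ncard_univ]
    _ ≤ (Sum.inl ⁻¹' s).ncard + (Sum.inr ⁻¹' s).ncard := Set.ncard_union_le _ _
    _ = s.ncard := Set.ncard_preimage_inl_add_ncard_preimage_inr s.toFinite

section MVC

variable {W : Type*} (G : SimpleGraph W)

theorem exists_isVertexCover_ncard_eq_MVC : ∃ C : Set W, IsVertexCover G C ∧ C.ncard = MVC G :=
  Nat.sInf_mem (s := {n | ∃ C : Set W, IsVertexCover G C ∧ C.ncard = n})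
    ⟨_, Set.univ, fun _ _ _ => Or.inl trivial, rfl⟩

theorem MVC_le_ncard {C : Set W} (hC : IsVertexCover G C) : MVC G ≤ C.ncard :=
  Nat.sInf_le ⟨C, hC, rfl⟩

end MVC

section addLayerWithTwins

variable {G : SimpleGraph V} {B : U → Finset V}

theorem IsVertexCover.image_inl_union_layer {C : Set V} (hC : IsVertexCover G C) :
    IsVertexCover (addLayerWithTwins G B) (Sum.inl '' C ∪ Sum.inr '' Set.range Sum.inl) := by
  rintro (v | u | u) (w | w | w) h
  · exact (hC h).imp (fun hv => Or.inl ⟨v, hv, rfl⟩) (fun hw => Or.inl ⟨w, hw, rfl⟩)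
  all_goals first
    | exact h.elim
    | exact Or.inl (Or.inr ⟨_, ⟨u, rfl⟩, rfl⟩)
    | exact Or.inr (Or.inr ⟨_, ⟨w, rfl⟩, rfl⟩)

theorem IsVertexCover.preimage_inl {C : Set (V ⊕ U ⊕ U)}
    (hC : IsVertexCover (addLayerWithTwins G B) C) : IsVertexCover G (Sum.inl ⁻¹' C) :=
  fun _ _ h => hC (a := .inl _) (b := .inl _) h

theorem IsVertexCover.twin_mem {C : Set (V ⊕ U ⊕ U)}
    (hC : IsVertexCover (addLayerWithTwins G B) C) (u : U) :
    Sum.inl u ∈ Sum.inr ⁻¹' C ∨ Sum.inr u ∈ Sum.inr ⁻¹' C :=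
  hC (a := .inr (.inl u)) (b := .inr (.inr u)) rfl

variable [Finite V] [Finite U]

theorem MVC_addLayerWithTwins_le : MVC (addLayerWithTwins G B) ≤ MVC G + Nat.card U := by
  obtain ⟨C, hC, hcard⟩ := exists_isVertexCover_ncard_eq_MVC G
  refine (MVC_le_ncard _ (hC.image_inl_union_layer (B := B))).trans_eq ?_
  rw [← Set.ncard_preimage_inl_add_ncard_preimage_inr (Set.toFinite _)]
  simp [Set.preimage_image_eq _ Sum.inl_injective, Set.preimage_image_eq _ Sum.inr_injective,
    Set.ncard_range_of_injective Sum.inl_injective, hcard]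

theorem le_MVC_addLayerWithTwins : MVC G + Nat.card U ≤ MVC (addLayerWithTwins G B) := by
  obtain ⟨C, hC, hcard⟩ := exists_isVertexCover_ncard_eq_MVC (addLayerWithTwins G B)
  calc MVC G + Nat.card U ≤ (Sum.inl ⁻¹' C).ncard + (Sum.inr ⁻¹' C).ncard :=
        add_le_add (MVC_le_ncard G hC.preimage_inl)
          (nat_card_le_ncard_of_forall_inl_mem_or_inr_mem hC.twin_mem)
    _ = MVC (addLayerWithTwins G B) := by
        rw [Set.ncard_preimage_inl_add_ncard_preimage_inr (Set.toFinite _), hcard]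

end addLayerWithTwins

/-- Adding a layer `U` with arbitrary edges to `V(G)` plus a pendant twin for each
vertex of `U` increases the minimum vertex cover size by exactly `|U|`. -/
theorem MVC_addLayerWithTwins [Fintype V] [Fintype U]
    (G : SimpleGraph V) (B : U → Finset V) :
    MVC (addLayerWithTwins G B) = MVC G + Fintype.card U := by
  rw [← Nat.card_eq_fintype_card]
  exact le_antisymm MVC_addLayerWithTwins_le le_MVC_addLayerWithTwins
end

section
/- Every simple graph on n vertices with strictly more than (1/2)(1 + sqrt(4n-3)) · n / 2 edges contains a cycle of length 4. In particular, any simple graph with at least n^{1.5} edges (for n ≥ 2) contains a 4-cycle. -/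
/-!
In a graph without 4-cycles two distinct vertices have at most one common neighbour, so the
pairs of neighbours of the various vertices are pairwise distinct pairs of vertices:
`∑ v, C(d v, 2) ≤ C(n, 2)`. Together with Cauchy–Schwarz and `∑ v, d v = 2e` this gives
`4e² ≤ n²(n - 1) + 2ne`, and the bound on `e` is the larger root of this quadratic.
-/

open scoped Classical

/-- `G` contains a cycle of length 4: four distinct vertices that are cyclically adjacent. -/
def HasFourCycle {V : Type*} (G : SimpleGraph V) : Prop :=
  ∃ v₁ v₂ v₃ v₄ : V, v₁ ≠ v₂ ∧ v₁ ≠ v₃ ∧ v₁ ≠ v₄ ∧ v₂ ≠ v₃ ∧ v₂ ≠ v₄ ∧ v₃ ≠ v₄ ∧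
    G.Adj v₁ v₂ ∧ G.Adj v₂ v₃ ∧ G.Adj v₃ v₄ ∧ G.Adj v₄ v₁

open Finset

noncomputable def fourCycleFreeBound (n : ℝ) : ℝ := 1 / 2 * (1 + √(4 * n - 3)) * n / 2

theorem le_fourCycleFreeBound_of_four_mul_sq_le {n e : ℝ} (hn : 0 ≤ n)
    (h : 4 * e ^ 2 ≤ n ^ 2 * (n - 1) + 2 * n * e) : e ≤ fourCycleFreeBound n := by
  have hsq : (4 * e - n) ^ 2 ≤ n ^ 2 * (4 * n - 3) := by nlinarith
  have : 4 * e - n ≤ n * √(4 * n - 3) := calc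
    4 * e - n ≤ |4 * e - n| := le_abs_self _
    _ ≤ √(n ^ 2 * (4 * n - 3)) := Real.abs_le_sqrt hsq
    _ = n * √(4 * n - 3) := by rw [Real.sqrt_mul (sq_nonneg n), Real.sqrt_sq hn]
  unfold fourCycleFreeBound
  linarith

theorem fourCycleFreeBound_lt_rpow_three_halves {n : ℝ} (hn : 1 / 4 < n) :
    fourCycleFreeBound n < n ^ (3 / 2 : ℝ) := by
  have hn0 : 0 < n := by linarith
  have hsqrt : 1 / 2 < √n := (Real.lt_sqrt (by norm_num)).2 (by linarith)
  have hsub : √(4 * n - 3) < 2 * √n :=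
    (Real.sqrt_lt' (by positivity)).2 (by nlinarith [Real.sq_sqrt hn0.le])
  calc fourCycleFreeBound n < n * √n := by unfold fourCycleFreeBound; nlinarith
    _ = n ^ (3 / 2 : ℝ) := by
      rw [show (3 / 2 : ℝ) = 1 + 1 / 2 by norm_num, Real.rpow_add hn0, Real.rpow_one,
        Real.sqrt_eq_rpow]

namespace SimpleGraph

variable {V : Type*} {G : SimpleGraph V}

theorem eq_of_adj_of_not_hasFourCycle (h : ¬ HasFourCycle G) {u w a b : V} (huw : u ≠ w)
    (hau : G.Adj a u) (haw : G.Adj a w) (hbu : G.Adj b u) (hbw : G.Adj b w) : a = b := by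
  by_contra hab
  exact h ⟨u, a, w, b, hau.ne', huw, hbu.ne', haw.ne, hab, hbw.ne', hau.symm, haw, hbw.symm, hbu⟩

variable [Fintype V]

theorem sum_degree_choose_two_le (h : ¬ HasFourCycle G) :
    ∑ v, (G.degree v).choose 2 ≤ (Fintype.card V).choose 2 := by
  calc ∑ v, (G.degree v).choose 2
      = #(univ.sigma fun v => (G.neighborFinset v).powersetCard 2) := by
        simp only [card_sigma, card_powersetCard, card_neighborFinset_eq_degree]
    _ ≤ #(univ.powersetCard 2 : Finset (Finset V)) := by
        refine card_le_card_of_injOn Sigma.snd (fun x hx => ?_) ?_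
        · simpa using (mem_powersetCard.1 (mem_sigma.1 hx).2).2
        · rintro ⟨a, p⟩ hap ⟨b, q⟩ hbq (rfl : p = q)
          simp only [coe_sigma, Set.mem_sigma_iff, mem_coe, mem_univ, true_and,
            mem_powersetCard] at hap hbq
          obtain ⟨u, w, huw, rfl⟩ := card_eq_two.1 hap.2
          simp only [insert_subset_iff, singleton_subset_iff, mem_neighborFinset] at hap hbq
          rw [eq_of_adj_of_not_hasFourCycle h huw hap.1.1 hap.1.2 hbq.1.1 hbq.1.2]
    _ = (Fintype.card V).choose 2 := by rw [card_powersetCard, card_univ]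

theorem four_mul_sq_card_edgeFinset_le (h : ¬ HasFourCycle G) :
    4 * (#G.edgeFinset : ℝ) ^ 2 ≤
      (Fintype.card V : ℝ) ^ 2 * (Fintype.card V - 1) + 2 * Fintype.card V * #G.edgeFinset := by
  set n := Fintype.card V
  have handshake : ∑ v, (G.degree v : ℝ) = 2 * #G.edgeFinset := by
    exact_mod_cast G.sum_degrees_eq_twice_card_edges
  have pairs : ∑ v, (G.degree v : ℝ) * (G.degree v - 1) ≤ n * (n - 1) := by
    have hchoose : ((∑ v, (G.degree v).choose 2 : ℕ) : ℝ) ≤ (n.choose 2 : ℕ) := by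
      exact_mod_cast sum_degree_choose_two_le h
    simp only [Nat.cast_sum, Nat.cast_choose_two, ← sum_div] at hchoose
    linarith
  have cauchySchwarz : (∑ v, (G.degree v : ℝ)) ^ 2 ≤ n * ∑ v, (G.degree v : ℝ) ^ 2 := by
    simpa using sq_sum_le_card_mul_sum_sq (s := univ) (f := fun v => (G.degree v : ℝ))
  have hsq : ∑ v, (G.degree v : ℝ) ^ 2
      = ∑ v, (G.degree v : ℝ) * (G.degree v - 1) + ∑ v, (G.degree v : ℝ) := by
    rw [← sum_add_distrib]
    exact sum_congr rfl fun v _ => by ring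
  calc 4 * (#G.edgeFinset : ℝ) ^ 2 = (∑ v, (G.degree v : ℝ)) ^ 2 := by rw [handshake]; ring
    _ ≤ n * ∑ v, (G.degree v : ℝ) ^ 2 := cauchySchwarz
    _ = n * (∑ v, (G.degree v : ℝ) * (G.degree v - 1) + 2 * #G.edgeFinset) := by
      rw [hsq, handshake]
    _ ≤ n * (n * (n - 1) + 2 * #G.edgeFinset) := by gcongr
    _ = (n : ℝ) ^ 2 * (n - 1) + 2 * n * #G.edgeFinset := by ring

theorem card_edgeFinset_le_fourCycleFreeBound (h : ¬ HasFourCycle G) :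
    (#G.edgeFinset : ℝ) ≤ fourCycleFreeBound (Fintype.card V) :=
  le_fourCycleFreeBound_of_four_mul_sq_le (Nat.cast_nonneg _) (G.four_mul_sq_card_edgeFinset_le h)

end SimpleGraph

/-- Kővári–Sós–Turán-type bound: a simple graph on `n` vertices with more than
`(1/2)(1 + √(4n-3)) · n / 2` edges contains a 4-cycle; in particular (for `n ≥ 2`)
any simple graph with at least `n^{3/2}` edges contains a 4-cycle. -/
theorem fourCycle_of_many_edges {V : Type*} [Fintype V] (G : SimpleGraph V) :
    ((1 / 2 : ℝ) * (1 + Real.sqrt (4 * Fintype.card V - 3)) * Fintype.card V / 2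
        < (G.edgeFinset.card : ℝ) → HasFourCycle G) ∧
    (2 ≤ Fintype.card V →
      (Fintype.card V : ℝ) ^ (3 / 2 : ℝ) ≤ (G.edgeFinset.card : ℝ) → HasFourCycle G) := by
  have many_edges : fourCycleFreeBound (Fintype.card V) < #G.edgeFinset → HasFourCycle G :=
    fun hlt => by_contra fun h => (G.card_edgeFinset_le_fourCycleFreeBound h).not_gt hlt
  refine ⟨many_edges, fun hn hge => many_edges ?_⟩
  have hn' : (2 : ℝ) ≤ Fintype.card V := by exact_mod_cast hn
  exact (fourCycleFreeBound_lt_rpow_three_halves (by linarith)).trans_le hge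
end

section
/- Let H be a pattern graph on k vertices with minimum degree at least 2 (no pendant vertices). Let G be a graph and let G' be obtained from G by adding new vertices and edges such that every newly added edge lies on a path all of whose internal vertices are new vertices of degree 2 and whose length is at least k+1 (i.e., new edges arise from subdividing auxiliary edges k times). Then H is isomorphic to a subgraph of G' if and only if H is isomorphic to a subgraph of G. -/
/-!
An injective homomorphism `f` from a graph of minimum degree at least `2` cannot stop inside a
chain of degree-`2` vertices: at such a vertex `f w`, the at least two neighbours of `w` must be
sent onto its only two neighbours. So if `f` met a new vertex, its image would contain the whole
subdivided path through it, which has at least `k + 2` vertices, more than `H` has. Hence `f`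
lands in the old vertices, where `G'` agrees with `G`.
-/

open scoped Classical

/-- `H` is isomorphic to a subgraph of `G`: there is an injective graph homomorphism. -/
def IsSubgraphOf {W X : Type*} (H : SimpleGraph W) (G : SimpleGraph X) : Prop :=
  ∃ f : H →g G, Function.Injective f

lemma Nat.forall_le_of_step_of_pos_of_lt {P : ℕ → Prop} {n i : ℕ} (hi₀ : 0 < i) (hin : i < n)
    (hPi : P i) (step : ∀ j, 0 < j → j < n → P j → P (j - 1) ∧ P (j + 1)) :
    ∀ j ≤ n, P j := by
  intro j hjn
  rcases le_total j i with hji | hij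
  · induction hji using Nat.decreasingInduction with
    | self => exact hPi
    | of_succ m hmi ih => simpa using (step (m + 1) (by omega) (by omega) (ih (by omega))).1
  · induction j, hij using Nat.le_induction with
    | base => exact hPi
    | succ m him ih => exact (step m (by omega) (by omega) (ih (by omega))).2

namespace SimpleGraph

variable {V W : Type*} {G : SimpleGraph V} {H : SimpleGraph W}

lemma neighborSet_subset_range_of_degree_le [H.LocallyFinite] [G.LocallyFinite] {f : H →g G}
    (hf : Function.Injective f) {w : W} (hdeg : G.degree (f w) ≤ H.degree w) :
    G.neighborSet (f w) ⊆ Set.range f := by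
  have himage : (H.neighborFinset w).image f = G.neighborFinset (f w) := by
    refine Finset.eq_of_subset_of_card_le (fun z hz => ?_) ?_
    · obtain ⟨w', hw', rfl⟩ := Finset.mem_image.mp hz
      exact (G.mem_neighborFinset _ _).mpr (f.map_adj ((H.mem_neighborFinset _ _).mp hw'))
    · rwa [Finset.card_image_of_injective _ hf, card_neighborFinset_eq_degree,
        card_neighborFinset_eq_degree]
  intro z hz
  obtain ⟨w', -, rfl⟩ := Finset.mem_image.mp (himage ▸ (G.mem_neighborFinset _ _).mpr hz)
  exact ⟨w', rfl⟩

namespace Walk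

variable {u v : V} {p : G.Walk u v}

lemma IsPath.support_subset_of_mem_interior (hp : p.IsPath) {S : Set V}
    (hS : ∀ z ∈ p.support, z ≠ u → z ≠ v → z ∈ S → G.neighborSet z ⊆ S)
    {z₀ : V} (hz₀ : z₀ ∈ p.support) (hz₀u : z₀ ≠ u) (hz₀v : z₀ ≠ v) (hz₀S : z₀ ∈ S) :
    ∀ z ∈ p.support, z ∈ S := by
  obtain ⟨i, rfl, hi⟩ := mem_support_iff_exists_getVert.mp hz₀
  have step (j : ℕ) (hj₀ : 0 < j) (hjn : j < p.length) (hjS : p.getVert j ∈ S) :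
      p.getVert (j - 1) ∈ S ∧ p.getVert (j + 1) ∈ S := by
    have hN := hS _ (p.getVert_mem_support j)
      (by rw [Ne, hp.getVert_eq_start_iff hjn.le]; omega)
      (by rw [Ne, hp.getVert_eq_end_iff hjn.le]; omega) hjS
    have hpred := p.adj_getVert_succ (i := j - 1) (by omega)
    rw [Nat.sub_add_cancel hj₀] at hpred
    exact ⟨hN hpred.symm, hN (p.adj_getVert_succ hjn)⟩
  have hi₀ : 0 < i := Nat.pos_of_ne_zero fun h => hz₀u (by simp [h])
  have hin : i < p.length := hi.lt_of_ne fun h => hz₀v (by simp [h])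
  have hall := Nat.forall_le_of_step_of_pos_of_lt (P := fun j => p.getVert j ∈ S) hi₀ hin hz₀S step
  intro z hz
  obtain ⟨j, rfl, hj⟩ := mem_support_iff_exists_getVert.mp hz
  exact hall j hj

lemma IsPath.length_lt_card_of_support_subset_range [Fintype W] (hp : p.IsPath) {f : W → V}
    (h : ∀ z ∈ p.support, z ∈ Set.range f) : p.length < Fintype.card W :=
  calc p.length < p.support.length := by simp
    _ = p.support.toFinset.card := (List.toFinset_card_of_nodup hp.support_nodup).symm
    _ ≤ (Finset.univ.image f).card := Finset.card_le_card fun z hz => by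
      obtain ⟨w, rfl⟩ := h z (List.mem_toFinset.mp hz)
      exact Finset.mem_image_of_mem f (Finset.mem_univ w)
    _ ≤ Fintype.card W := Finset.card_image_le

lemma IsPath.length_lt_card_of_injective_hom [Fintype W] [G.LocallyFinite] (hp : p.IsPath)
    (hdeg : ∀ z ∈ p.support, z ≠ u → z ≠ v → G.degree z ≤ 2)
    (hmin : ∀ w : W, 2 ≤ H.degree w) {f : H →g G} (hf : Function.Injective f) {w₀ : W}
    (hw₀ : f w₀ ∈ p.support) (hw₀u : f w₀ ≠ u) (hw₀v : f w₀ ≠ v) : p.length < Fintype.card W := by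
  refine hp.length_lt_card_of_support_subset_range
    (hp.support_subset_of_mem_interior ?_ hw₀ hw₀u hw₀v ⟨w₀, rfl⟩)
  rintro _ hz hzu hzv ⟨w, rfl⟩
  exact neighborSet_subset_range_of_degree_le hf ((hdeg _ hz hzu hzv).trans (hmin w))

end Walk

end SimpleGraph

lemma isSubgraphOf_of_forall_mem_range {W V V' : Type*} {H : SimpleGraph W} {G : SimpleGraph V}
    {G' : SimpleGraph V'} (e : G ↪g G') {f : H →g G'} (hf : Function.Injective f)
    (h : ∀ w, f w ∈ Set.range e) : IsSubgraphOf H G := by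
  choose g hg using h
  refine ⟨⟨g, fun {a b} hab => ?_⟩, fun a b hab => hf (by rw [← hg a, ← hg b]; exact congrArg e hab)⟩
  rw [← e.map_adj_iff, hg, hg]
  exact f.map_adj hab

theorem subgraphIsomorphism_subdivision_general
    {W V V' : Type*} [Fintype W] [Fintype V'] (k : ℕ)
    (H : SimpleGraph W) (hcard : Fintype.card W = k) (hmin : ∀ w : W, 2 ≤ H.degree w)
    (G : SimpleGraph V) (G' : SimpleGraph V') (ι : V ↪ V')
    (hold : ∀ u v : V, G'.Adj (ι u) (ι v) ↔ G.Adj u v)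
    (hnew : ∀ a' b' : V', G'.Adj a' b' →
      (a' ∉ Set.range ι ∨ b' ∉ Set.range ι) →
      ∃ (x y : V) (p : G'.Walk (ι x) (ι y)), p.IsPath ∧ k + 1 ≤ p.length ∧
        s(a', b') ∈ p.edges ∧
        ∀ z ∈ p.support, z ≠ ι x → z ≠ ι y →
          z ∉ Set.range ι ∧ G'.degree z = 2) :
    IsSubgraphOf H G' ↔ IsSubgraphOf H G := by
  let e : G ↪g G' := ⟨ι, hold _ _⟩
  refine ⟨fun ⟨f, hf⟩ => isSubgraphOf_of_forall_mem_range e hf fun w₀ => ?_,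
    fun ⟨f, hf⟩ => ⟨e.toHom.comp f, e.injective.comp hf⟩⟩
  by_contra hw₀
  obtain ⟨w₁, hw₁⟩ := (H.degree_pos_iff_exists_adj w₀).mp (by linarith [hmin w₀])
  obtain ⟨x, y, p, hp, hlen, hedge, hint⟩ := hnew _ _ (f.map_adj hw₁) (.inl hw₀)
  have := hp.length_lt_card_of_injective_hom (fun z hz hzx hzy => (hint z hz hzx hzy).2.le)
    hmin hf (p.fst_mem_support_of_mem_edges hedge)
    (fun h => hw₀ ⟨x, h.symm⟩) (fun h => hw₀ ⟨y, h.symm⟩)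
  omega

/-- Let `H` be a pattern on `k` vertices with minimum degree at least `2`.  Let `G'` be
obtained from `G` by adding new vertices and edges (old vertices are embedded via `ι`,
with old-old adjacency unchanged) such that every edge incident to a new vertex lies on a
path of length at least `k+1` between old vertices all of whose internal vertices are new
vertices of degree `2`.  Then `H` is a subgraph of `G'` iff `H` is a subgraph of `G`. -/
theorem subgraphIsomorphism_subdivision
    {W V V' : Type*} [Fintype W] [Fintype V] [Fintype V'] (k : ℕ)
    (H : SimpleGraph W) (hcard : Fintype.card W = k) (hmin : ∀ w : W, 2 ≤ H.degree w)
    (G : SimpleGraph V) (G' : SimpleGraph V') (ι : V ↪ V')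
    (hold : ∀ u v : V, G'.Adj (ι u) (ι v) ↔ G.Adj u v)
    (hnew : ∀ a' b' : V', G'.Adj a' b' →
      (a' ∉ Set.range ι ∨ b' ∉ Set.range ι) →
      ∃ (x y : V) (p : G'.Walk (ι x) (ι y)), p.IsPath ∧ k + 1 ≤ p.length ∧
        s(a', b') ∈ p.edges ∧
        ∀ z ∈ p.support, z ≠ ι x → z ≠ ι y →
          z ∉ Set.range ι ∧ G'.degree z = 2) :
    IsSubgraphOf H G' ↔ IsSubgraphOf H G :=
  subgraphIsomorphism_subdivision_general k H hcard hmin G G' ι hold hnew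
end

section
/- Every connected graph G on n ≥ ⌈1/ε⌉ vertices (for 0 < ε ≤ 1) has a spanning tree T that can be decomposed into connected, edge-disjoint subgraphs H_1, ..., H_k whose edge sets partition E(T), such that each H_i has between 1/ε and 3/ε vertices. -/
open scoped Classical

namespace ConnDecomp

open SimpleGraph

variable {V : Type*}

/-- The restriction of a graph to a vertex set, as a graph on the same vertex type. -/
def resG (T : SimpleGraph V) (W : Set V) : SimpleGraph V where
  Adj x y := x ∈ W ∧ y ∈ W ∧ T.Adj x y
  symm := ⟨fun x y ⟨hx, hy, h⟩ => ⟨hy, hx, h.symm⟩⟩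
  loopless := ⟨fun x ⟨_, _, h⟩ => T.loopless.irrefl x h⟩

@[simp] lemma resG_adj {T : SimpleGraph V} {W : Set V} {x y : V} :
    (resG T W).Adj x y ↔ x ∈ W ∧ y ∈ W ∧ T.Adj x y := Iff.rfl

lemma resG_le (T : SimpleGraph V) (W : Set V) : resG T W ≤ T := fun _ _ h => h.2.2

lemma resG_mono (T : SimpleGraph V) {W W' : Set V} (h : W ⊆ W') : resG T W ≤ resG T W' :=
  fun _ _ ⟨hx, hy, ha⟩ => ⟨h hx, h hy, ha⟩

lemma mem_of_support {T : SimpleGraph V} {W : Set V} :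
    ∀ {a b : V} (w : (resG T W).Walk a b), a ∈ W → ∀ z ∈ w.support, z ∈ W := by
  intro a b w
  induction w with
  | nil => intro ha z hz; simp only [SimpleGraph.Walk.support_nil, List.mem_singleton] at hz
           subst hz; exact ha
  | cons h p ih =>
      intro ha z hz
      rw [SimpleGraph.Walk.support_cons, List.mem_cons] at hz
      rcases hz with rfl | hz
      · exact ha
      · exact ih h.2.1 z hz

lemma reach_of_support_subset {T : SimpleGraph V} {W A : Set V} :
    ∀ {a b : V} (w : (resG T W).Walk a b), (∀ z ∈ w.support, z ∈ A) →
      (resG T A).Reachable a b := by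
  intro a b w
  induction w with
  | nil => intro _; exact Reachable.refl _
  | @cons a c b h p ih =>
      intro hA
      have ha : a ∈ A := hA a (by simp [SimpleGraph.Walk.support_cons])
      have hc : c ∈ A := hA c (by simp [SimpleGraph.Walk.support_cons, p.start_mem_support])
      exact (SimpleGraph.Adj.reachable (show (resG T A).Adj a c from ⟨ha, hc, h.2.2⟩)).trans
        (ih fun z hz => hA z (by simp [SimpleGraph.Walk.support_cons, hz]))

lemma reach_support {T : SimpleGraph V} {W : Set V} {a b : V}
    (w : (resG T W).Walk a b) {z : V} (hz : z ∈ w.support) :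
    (resG T W).Reachable a z := ⟨w.takeUntil z hz⟩



lemma reach_lift {G G' : SimpleGraph V}
    (hadj : ∀ a b : V, G.Adj a b → G'.Reachable a b) :
    ∀ {a b : V}, G.Reachable a b → G'.Reachable a b := by
  intro a b h
  obtain ⟨w⟩ := h
  induction w with
  | nil => exact Reachable.refl _
  | cons h p ih => exact (hadj _ _ h).trans ih

lemma exists_tree [Finite V] (G : SimpleGraph V) (hG : G.Connected) :
    ∃ T : SimpleGraph V, T ≤ G ∧ T.IsTree := by
  obtain ⟨N, hN⟩ : ∃ N, G.edgeSet.ncard = N := ⟨_, rfl⟩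
  induction N using Nat.strong_induction_on generalizing G with
  | _ N ih =>
    by_cases hac : G.IsAcyclic
    · exact ⟨G, le_rfl, hG, hac⟩
    · rw [isAcyclic_iff_forall_adj_isBridge] at hac
      push_neg at hac
      obtain ⟨v, w, hadj, hnb⟩ := hac
      set G' := G \ fromEdgeSet {s(v, w)} with hG'
      have hle : G' ≤ G := sdiff_le
      have hRvw : G'.Reachable v w := by
        by_contra hR
        exact hnb (by
          rw [isBridge_iff]
          exact hR)
      have hadjreach : ∀ a b : V, G.Adj a b → G'.Reachable a b := by
        intro a b hab
        by_cases he : s(a, b) = s(v, w)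
        · rw [Sym2.eq_iff] at he
          rcases he with ⟨rfl, rfl⟩ | ⟨rfl, rfl⟩
          · exact hRvw
          · exact hRvw.symm
        · exact SimpleGraph.Adj.reachable ⟨hab, by
            rw [fromEdgeSet_adj]
            exact fun h => he h.1⟩
      have hG'conn : G'.Connected := by
        have hne : Nonempty V := hG.nonempty
        rw [connected_iff]
        exact ⟨fun a b => reach_lift hadjreach (hG.preconnected a b), hne⟩
      have hedge : G'.edgeSet = G.edgeSet \ {s(v, w)} := by
        rw [hG', edgeSet_sdiff, edgeSet_fromEdgeSet]
        ext e
        simp only [Set.mem_diff, Set.mem_setOf_eq, Set.mem_singleton_iff, not_and, not_not]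
        constructor
        · rintro ⟨he, h2⟩
          exact ⟨he, fun hh => (G.not_isDiag_of_mem_edgeSet he) (h2 hh)⟩
        · rintro ⟨he, h2⟩
          exact ⟨he, fun hh => absurd hh h2⟩
      have hlt : G'.edgeSet.ncard < N := by
        rw [← hN, hedge]
        have hmem : s(v, w) ∈ G.edgeSet := hadj
        have : G.edgeSet \ {s(v, w)} ⊂ G.edgeSet := by
          refine Set.ssubset_iff_of_subset Set.diff_subset |>.mpr ⟨s(v, w), hmem, by simp⟩
        exact Set.ncard_lt_ncard this (Set.toFinite _)
      obtain ⟨T, hT1, hT2⟩ := ih _ hlt G' hG'conn rfl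
      exact ⟨T, hT1.trans hle, hT2⟩



lemma escape {T : SimpleGraph V} {U Z : Set V} {v : V}
    (hZ : ∀ x ∈ Z, ∀ y : V, (resG T U).Adj x y → y ∈ Z ∨ y = v) :
    ∀ {a b : V} (q : (resG T U).Walk a b), a ∈ Z → b ∉ Z → v ∈ q.support := by
  intro a b q
  induction q with
  | nil => intro ha hb; exact absurd ha hb
  | @cons a c b h p ih =>
      intro ha hb
      rcases hZ a ha c h with hc | rfl
      · rw [SimpleGraph.Walk.support_cons, List.mem_cons]
        exact Or.inr (ih hc hb)
      · rw [SimpleGraph.Walk.support_cons, List.mem_cons]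
        exact Or.inr p.start_mem_support

lemma mem_support_both {G : SimpleGraph V} {a b z v : V} {p : G.Walk a b}
    (hp : p.IsPath) (hz : z ∈ p.support)
    (hv1 : v ∈ (p.takeUntil z hz).support) (hv2 : v ∈ (p.dropUntil z hz).support) :
    v = z := by
  by_contra hne
  have hnd := hp.support_nodup
  rw [← SimpleGraph.Walk.take_spec p hz, SimpleGraph.Walk.support_append] at hnd
  have hdisj := (List.nodup_append.mp hnd).2.2
  have hv2' : v ∈ (p.dropUntil z hz).support.tail := by
    have := SimpleGraph.Walk.support_eq_cons (p.dropUntil z hz)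
    rw [this, List.mem_cons] at hv2
    rcases hv2 with rfl | hv2
    · exact absurd rfl hne
    · exact hv2
  exact hdisj v hv1 v hv2' rfl

/-- From a path ending at `v` and starting elsewhere, extract the last step:
a neighbor `w` of `v` reachable from the start avoiding `v`. -/
lemma laststep {T : SimpleGraph V} {S : Set V} :
    ∀ {a v : V} (q : (resG T S).Walk a v), q.IsPath → a ≠ v →
      ∃ w ∈ S \ {v}, T.Adj w v ∧ (resG T (S \ {v})).Reachable a w := by
  intro a v q
  induction q with
  | nil => intro _ ha; exact absurd rfl ha
  | @cons a c v h p ih =>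
      intro hq ha
      by_cases hc : c = v
      · subst hc
        have hpnil : p = SimpleGraph.Walk.nil := by
          rw [← SimpleGraph.Walk.isPath_iff_eq_nil]
          exact hq.of_cons
        refine ⟨a, ⟨h.1, by simpa using ha⟩, ?_, Reachable.refl _⟩
        exact h.2.2
      · obtain ⟨w, hw1, hw2, hw3⟩ := ih hq.of_cons hc
        refine ⟨w, hw1, hw2, ?_⟩
        have hanv : a ∈ S \ {v} := ⟨h.1, by simpa using ha⟩
        have hcnv : c ∈ S \ {v} := ⟨h.2.1, by simpa using hc⟩
        exact (SimpleGraph.Adj.reachable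
          (show (resG T (S \ {v})).Adj a c from ⟨hanv, hcnv, h.2.2⟩)).trans hw3

/-- Lift reachability in `resG T U` to the coerced induced subgraph. -/
lemma reach_coe {T : SimpleGraph V} {U : Set V} :
    ∀ {a b : V} (w : (resG T U).Walk a b) (ha : a ∈ U) (hb : b ∈ U),
      ((⊤ : T.Subgraph).induce U).coe.Reachable ⟨a, ha⟩ ⟨b, hb⟩ := by
  intro a b w
  induction w with
  | nil => intro ha hb; exact Reachable.refl _
  | @cons a c b h p ih =>
      intro ha hb
      have step : ((⊤ : T.Subgraph).induce U).coe.Adj ⟨a, ha⟩ ⟨c, h.2.1⟩ := by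
        rw [Subgraph.coe_adj]
        exact ⟨ha, h.2.1, h.2.2⟩
      exact step.reachable.trans (ih h.2.1 hb)

lemma induce_conn {T : SimpleGraph V} {U : Set V} (hne : U.Nonempty)
    (hconn : ∀ a ∈ U, ∀ b ∈ U, (resG T U).Reachable a b) :
    ((⊤ : T.Subgraph).induce U).Connected := by
  rw [Subgraph.connected_iff]
  refine ⟨⟨fun a b => ?_⟩, by simpa using hne⟩
  obtain ⟨w⟩ := hconn a a.2 b b.2
  have := reach_coe w a.2 b.2
  convert this

/-- The connected component of `x` inside `W`. -/
def cset (T : SimpleGraph V) (W : Set V) (x : V) : Set V :=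
  {y | y ∈ W ∧ (resG T W).Reachable x y}

lemma cset_subset (T : SimpleGraph V) (W : Set V) (x : V) : cset T W x ⊆ W :=
  fun _ h => h.1

lemma mem_cset_self {T : SimpleGraph V} {W : Set V} {x : V} (hx : x ∈ W) :
    x ∈ cset T W x := ⟨hx, Reachable.refl _⟩

lemma cset_mono {T : SimpleGraph V} {W W' : Set V} (h : W' ⊆ W) (x : V) :
    cset T W' x ⊆ cset T W x :=
  fun _ ⟨hy, hr⟩ => ⟨h hy, hr.mono (resG_mono T h)⟩

lemma start_mem_of_end {T : SimpleGraph V} {W : Set V} {a b : V}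
    (w : (resG T W).Walk a b) (hb : b ∈ W) : a ∈ W :=
  mem_of_support w.reverse hb a w.reverse.end_mem_support

lemma cset_conn {T : SimpleGraph V} {W : Set V} {x : V} :
    ∀ a ∈ cset T W x, ∀ b ∈ cset T W x,
      (resG T (cset T W x)).Reachable a b := by
  have key : ∀ a ∈ cset T W x, (resG T (cset T W x)).Reachable x a := by
    rintro a ⟨haW, hra⟩
    obtain ⟨w⟩ := hra
    have hxW : x ∈ W := start_mem_of_end w haW
    refine reach_of_support_subset w fun z hz =>
      ⟨mem_of_support w hxW z hz, reach_support w hz⟩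
  intro a ha b hb
  exact (key a ha).symm.trans (key b hb)

lemma greedy [Finite V] (T : SimpleGraph V) (s : ℕ) (hs : 2 ≤ s) :
    ∀ (N : ℕ) (W : Set V), W.ncard = N →
      (∀ x ∈ W, (cset T W x).ncard ≤ s - 1) → s - 1 ≤ W.ncard →
      ∃ A, A ⊆ W ∧ (∀ x ∈ A, ∀ y ∈ cset T W x, y ∈ A) ∧
        s - 1 ≤ A.ncard ∧ A.ncard ≤ 2 * s - 3 := by
  intro N
  induction N using Nat.strong_induction_on with
  | _ N ih =>
  intro W hN hcomp hW
  by_cases hsmall : W.ncard ≤ 2 * s - 3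
  · exact ⟨W, subset_rfl, fun x _ y hy => hy.1, hW, hsmall⟩
  · push_neg at hsmall
    have hWpos : 0 < W.ncard := by omega
    obtain ⟨x₀, hx₀⟩ := (Set.ncard_pos (W.toFinite)).mp hWpos
    set C := cset T W x₀ with hC
    have hCsub : C ⊆ W := cset_subset T W x₀
    have hCmem : x₀ ∈ C := mem_cset_self hx₀
    have hCpos : 0 < C.ncard := (Set.ncard_pos (C.toFinite)).mpr ⟨x₀, hCmem⟩
    have hCle : C.ncard ≤ s - 1 := hcomp x₀ hx₀
    set W' := W \ C with hW'
    have hW'card : W'.ncard = W.ncard - C.ncard := Set.ncard_diff hCsub (C.toFinite)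
    have hlt : W'.ncard < N := by omega
    have hcomp' : ∀ x ∈ W', (cset T W' x).ncard ≤ s - 1 := fun x hx =>
      le_trans (Set.ncard_le_ncard (cset_mono Set.diff_subset x) ((cset T W x).toFinite))
        (hcomp x hx.1)
    have hW'ge : s - 1 ≤ W'.ncard := by omega
    obtain ⟨A, hA1, hA2, hA3, hA4⟩ := ih W'.ncard hlt W' rfl hcomp' hW'ge
    refine ⟨A, hA1.trans Set.diff_subset, ?_, hA3, hA4⟩
    intro x hx y hy
    have hxW' : x ∈ W' := hA1 hx
    have hxnC : x ∉ C := hxW'.2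
    have hynC : y ∉ C := fun hyC => hxnC ⟨hxW'.1, hyC.2.trans hy.2.symm⟩
    obtain ⟨w⟩ := hy.2
    have hsupp : ∀ z ∈ w.support, z ∈ W' := by
      intro z hz
      have hzW : z ∈ W := mem_of_support w hxW'.1 z hz
      exact ⟨hzW, fun hzC => hxnC ⟨hxW'.1, hzC.2.trans (reach_support w hz).symm⟩⟩
    exact hA2 x hx y ⟨⟨hy.1, hynC⟩, reach_of_support_subset w hsupp⟩


lemma reach_del {T : SimpleGraph V} {W : Set V} {v w : V} (hv : v ∉ W) :
    ∀ {a b : V} (_ : (resG T W).Walk a b),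
      (T \ SimpleGraph.fromEdgeSet {s(v, w)}).Reachable a b := by
  intro a b q
  induction q with
  | nil => exact Reachable.refl _
  | @cons a c d h p ihq =>
      refine (SimpleGraph.Adj.reachable (show (T \ SimpleGraph.fromEdgeSet _).Adj a c
        from ⟨h.2.2, ?_⟩)).trans ihq
      rw [fromEdgeSet_adj]
      rintro ⟨he, -⟩
      rw [Set.mem_singleton_iff, Sym2.eq_iff] at he
      rcases he with ⟨h1, -⟩ | ⟨-, h2⟩
      · exact hv (h1 ▸ h.1)
      · exact hv (h2 ▸ h.2.1)

/-- `Good T s U v S`: `S` is a connected subset of `U` anchored at `v`, with at least `s`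
vertices, such that every `T`-edge leaving `S ∖ {v}` within `U` stays in `S`. -/
def Good (T : SimpleGraph V) (s : ℕ) (U : Set V) (v : V) (S : Set V) : Prop :=
  v ∈ S ∧ S ⊆ U ∧ (∀ a ∈ S, ∀ b ∈ S, (resG T S).Reachable a b) ∧
    (∀ x y : V, x ∈ S → x ≠ v → T.Adj x y → y ∈ U → y ∈ S) ∧ s ≤ S.ncard

lemma shrink [Finite V] (T : SimpleGraph V) (hacyc : T.IsAcyclic) (s : ℕ) (hs : 2 ≤ s)
    (U : Set V) :
    ∀ (N : ℕ) (v : V) (S : Set V), S.ncard = N → Good T s U v S →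
      ∃ v' S', Good T s U v' S' ∧ S'.ncard ≤ 2 * s - 2 := by
  intro N
  induction N using Nat.strong_induction_on with
  | _ N ih =>
  intro v S hN hgood
  obtain ⟨hvS, hSU, hconn, hclosed, hscard⟩ := hgood
  by_cases hbig : S.ncard ≤ 2 * s - 2
  · exact ⟨v, S, ⟨hvS, hSU, hconn, hclosed, hscard⟩, hbig⟩
  push_neg at hbig
  set W := S \ {v} with hWdef
  have hWsub : W ⊆ S := Set.diff_subset
  have hWcard : W.ncard = S.ncard - 1 := Set.ncard_diff_singleton_of_mem hvS
  by_cases hA : ∀ x ∈ W, (cset T W x).ncard ≤ s - 1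
  · -- all components of `S ∖ {v}` are small: build a good set greedily
    have hWge : s - 1 ≤ W.ncard := by omega
    obtain ⟨A, hA1, hA2, hA3, hA4⟩ := greedy T s hs W.ncard W rfl hA hWge
    set S' := insert v A with hS'def
    have hvA : v ∉ A := fun h => (hA1 h).2 rfl
    have hS'card : S'.ncard = A.ncard + 1 := Set.ncard_insert_of_notMem hvA (A.toFinite)
    have hclosed' : ∀ x y : V, x ∈ S' → x ≠ v → T.Adj x y → y ∈ U → y ∈ S' := by
      intro x y hx hxv hxy hyU
      have hxA : x ∈ A := by
        rcases hx with rfl | h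
        · exact absurd rfl hxv
        · exact h
      have hxW : x ∈ W := hA1 hxA
      have hyS : y ∈ S := hclosed x y (hWsub hxW) hxv hxy hyU
      by_cases hyv : y = v
      · subst hyv; exact Set.mem_insert _ _
      · have hyW : y ∈ W := ⟨hyS, hyv⟩
        exact Set.mem_insert_of_mem _ (hA2 x hxA y
          ⟨hyW, SimpleGraph.Adj.reachable (show (resG T W).Adj x y from ⟨hxW, hyW, hxy⟩)⟩)
    have hconn' : ∀ a ∈ S', ∀ b ∈ S', (resG T S').Reachable a b := by
      have key : ∀ a ∈ S', (resG T S').Reachable a v := by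
        rintro a (rfl | haA)
        · exact Reachable.refl _
        have haS : a ∈ S := hWsub (hA1 haA)
        obtain ⟨w0⟩ := hconn a haS v hvS
        set p := (w0.toPath : (resG T S).Walk a v) with hpdef
        have hp : p.IsPath := w0.toPath.2
        have hsupp : ∀ z ∈ p.support, z ∈ S' := by
          intro z hz
          by_cases hzv : z = v
          · subst hzv; exact Set.mem_insert _ _
          · set q := p.takeUntil z hz with hqdef
            have hvq : v ∉ q.support := fun hvq =>
              hzv (mem_support_both hp hz hvq ((p.dropUntil z hz).end_mem_support)).symm
            have hqW : ∀ u ∈ q.support, u ∈ W := by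
              intro u hu
              refine ⟨mem_of_support q haS u hu, fun huv => hvq ?_⟩
              simp only [Set.mem_singleton_iff] at huv
              subst huv; exact hu
            exact Set.mem_insert_of_mem _ (hA2 a haA z
              ⟨hqW z q.end_mem_support, reach_of_support_subset q hqW⟩)
        exact reach_of_support_subset p hsupp
      intro a ha b hb
      exact (key a ha).trans (key b hb).symm
    refine ⟨v, S', ⟨Set.mem_insert _ _, ?_, hconn', hclosed', ?_⟩, ?_⟩
    · rintro x (rfl | hx)
      · exact hSU hvS
      · exact hSU (hWsub (hA1 hx))
    · omega
    · omega
  · -- some component of `S ∖ {v}` is large: it is a smaller good set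
    push_neg at hA
    obtain ⟨x₀, hx₀W, hx₀big⟩ := hA
    have hx₀C : s ≤ (cset T W x₀).ncard := by omega
    set C := cset T W x₀ with hCdef
    have hx₀S : x₀ ∈ S := hWsub hx₀W
    obtain ⟨w0⟩ := hconn x₀ hx₀S v hvS
    have hx₀v : x₀ ≠ v := hx₀W.2
    obtain ⟨w, hwW, hwadj, hwreach⟩ :=
      laststep (w0.toPath : (resG T S).Walk x₀ v) w0.toPath.2 hx₀v
    have hwC : w ∈ C := ⟨hwW, hwreach⟩
    have hCsubW : C ⊆ W := cset_subset _ _ _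
    have hgoodC : Good T s U w C := by
      refine ⟨hwC, (hCsubW.trans hWsub).trans hSU, cset_conn, ?_, hx₀C⟩
      intro x y hxC hxw hxy hyU
      have hxW : x ∈ W := hCsubW hxC
      have hyS : y ∈ S := hclosed x y (hWsub hxW) hxW.2 hxy hyU
      by_cases hyv : y = v
      · exfalso
        subst hyv
        have hbr : T.IsBridge s(y, w) := (isAcyclic_iff_forall_adj_isBridge.mp hacyc) hwadj.symm
        rw [isBridge_iff] at hbr
        apply hbr
        have hxv : x ≠ y := hxW.2
        have step1 : (T \ SimpleGraph.fromEdgeSet {s(y, w)}).Adj y x := by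
          refine ⟨hxy.symm, ?_⟩
          rw [fromEdgeSet_adj]
          rintro ⟨he, -⟩
          rw [Set.mem_singleton_iff, Sym2.eq_iff] at he
          rcases he with ⟨-, h2⟩ | ⟨h1, h2⟩
          · exact hxw h2
          · exact hxv h2
        have hxw_reach : (resG T W).Reachable x w := hxC.2.symm.trans hwreach
        obtain ⟨q⟩ := hxw_reach
        have step2 : (T \ SimpleGraph.fromEdgeSet {s(y, w)}).Reachable x w :=
          reach_del (fun hyW => hyW.2 rfl) q
        exact step1.reachable.trans step2
      · have hyW : y ∈ W := ⟨hyS, hyv⟩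
        exact ⟨hyW, hxC.2.trans
          (SimpleGraph.Adj.reachable (show (resG T W).Adj x y from ⟨hxW, hyW, hxy⟩))⟩
    have hClt : C.ncard < N := by
      rw [← hN]
      refine Set.ncard_lt_ncard ⟨hCsubW.trans hWsub, fun hsub => ?_⟩ (S.toFinite)
      exact (hCsubW (hsub hvS)).2 rfl
    exact ih C.ncard hClt w C rfl hgoodC

lemma split [Finite V] (T : SimpleGraph V) (hacyc : T.IsAcyclic) (s : ℕ) (hs : 2 ≤ s)
    (U : Set V) (hconn : ∀ a ∈ U, ∀ b ∈ U, (resG T U).Reachable a b)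
    (hcard : 3 * s - 2 ≤ U.ncard) :
    ∃ v S, Good T s U v S ∧ S.ncard ≤ 2 * s - 2 := by
  have hpos : 0 < U.ncard := by omega
  obtain ⟨v₀, hv₀⟩ := (Set.ncard_pos (U.toFinite)).mp hpos
  exact shrink T hacyc s hs U U.ncard v₀ U rfl
    ⟨hv₀, subset_rfl, hconn, fun x y _ _ _ hy => hy, by omega⟩

lemma R_conn {T : SimpleGraph V} {s : ℕ} {U S : Set V} {v : V}
    (hgood : Good T s U v S)
    (hUconn : ∀ a ∈ U, ∀ b ∈ U, (resG T U).Reachable a b) :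
    ∀ a ∈ (U \ S) ∪ {v}, ∀ b ∈ (U \ S) ∪ {v},
      (resG T ((U \ S) ∪ {v})).Reachable a b := by
  obtain ⟨hvS, hSU, _, hclosed, -⟩ := hgood
  intro a ha b hb
  set R := (U \ S) ∪ {v} with hRdef
  have hRU : R ⊆ U := by
    rintro z (hz | hz)
    · exact hz.1
    · rw [Set.mem_singleton_iff] at hz; subst hz; exact hSU hvS
  have hRZ : ∀ z ∈ R, z ∉ S \ {v} := by
    rintro z (hz | hz) hzS
    · exact hz.2 hzS.1
    · rw [Set.mem_singleton_iff] at hz; exact hzS.2 hz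
  obtain ⟨w0⟩ := hUconn a (hRU ha) b (hRU hb)
  set p := (w0.toPath : (resG T U).Walk a b) with hpdef
  have hp : p.IsPath := w0.toPath.2
  have hZ : ∀ x ∈ S \ {v}, ∀ y : V, (resG T U).Adj x y → y ∈ S \ {v} ∨ y = v := by
    intro x hx y hadj
    have hyS : y ∈ S := hclosed x y hx.1 hx.2 hadj.2.2 hadj.2.1
    by_cases hyv : y = v
    · exact Or.inr hyv
    · exact Or.inl ⟨hyS, hyv⟩
  have hsupp : ∀ z ∈ p.support, z ∈ R := by
    intro z hz
    by_contra hzR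
    have hzU : z ∈ U := mem_of_support p (hRU ha) z hz
    have hzZ : z ∈ S \ {v} := by
      by_cases hzS : z ∈ S
      · refine ⟨hzS, fun hzv => hzR (Or.inr hzv)⟩
      · exact absurd (Or.inl ⟨hzU, hzS⟩) hzR
    have h1 : v ∈ (p.dropUntil z hz).support :=
      escape hZ (p.dropUntil z hz) hzZ (hRZ b hb)
    have h2 : v ∈ (p.takeUntil z hz).support := by
      have := escape hZ (p.takeUntil z hz).reverse hzZ (hRZ a ha)
      rwa [SimpleGraph.Walk.support_reverse, List.mem_reverse] at this
    exact hzZ.2 (mem_support_both hp hz h2 h1).symm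
  exact reach_of_support_subset p hsupp

lemma edge_split {T : SimpleGraph V} {s : ℕ} {U S : Set V} {v : V}
    (hgood : Good T s U v S) :
    ∀ x y : V, T.Adj x y → x ∈ U → y ∈ U →
      (x ∈ S ∧ y ∈ S) ∨ (x ∈ (U \ S) ∪ {v} ∧ y ∈ (U \ S) ∪ {v}) := by
  obtain ⟨hvS, hSU, -, hclosed, -⟩ := hgood
  intro x y hxy hxU hyU
  by_cases hx : x ∈ S ∧ x ≠ v
  · exact Or.inl ⟨hx.1, hclosed x y hx.1 hx.2 hxy hyU⟩
  by_cases hy : y ∈ S ∧ y ≠ v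
  · exact Or.inl ⟨hclosed y x hy.1 hy.2 hxy.symm hxU, hy.1⟩
  · refine Or.inr ⟨?_, ?_⟩
    · by_cases hxv : x = v
      · exact Or.inr hxv
      · exact Or.inl ⟨hxU, fun hxS => hx ⟨hxS, hxv⟩⟩
    · by_cases hyv : y = v
      · exact Or.inr hyv
      · exact Or.inl ⟨hyU, fun hyS => hy ⟨hyS, hyv⟩⟩

lemma main [Finite V] (T : SimpleGraph V) (hacyc : T.IsAcyclic) (s : ℕ) (hs : 2 ≤ s) :
    ∀ (N : ℕ) (U : Set V), U.ncard = N → s ≤ U.ncard →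
      (∀ a ∈ U, ∀ b ∈ U, (resG T U).Reachable a b) →
      ∃ (k : ℕ) (H : Fin k → T.Subgraph),
        (∀ i, (H i).Connected) ∧
        (∀ i j, i ≠ j → Disjoint (H i).edgeSet (H j).edgeSet) ∧
        (⋃ i, (H i).edgeSet) = ((⊤ : T.Subgraph).induce U).edgeSet ∧
        (∀ i, s ≤ (H i).verts.ncard ∧ (H i).verts.ncard ≤ 3 * s - 3) := by
  intro N
  induction N using Nat.strong_induction_on with
  | _ N ih =>
  intro U hN hsU hconn
  have hUne : U.Nonempty := (Set.ncard_pos (U.toFinite)).mp (by omega)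
  by_cases hsmall : U.ncard ≤ 3 * s - 3
  · refine ⟨1, fun _ => (⊤ : T.Subgraph).induce U, ?_, ?_, ?_, ?_⟩
    · intro _; exact induce_conn hUne hconn
    · intro i j hij; exact absurd (Subsingleton.elim i j) hij
    · exact Set.iUnion_const _
    · intro _
      refine ⟨?_, ?_⟩
      · simpa using hsU
      · simpa using hsmall
  · push_neg at hsmall
    have hcard : 3 * s - 2 ≤ U.ncard := by omega
    obtain ⟨v, S, hgood, hSsmall⟩ := split T hacyc s hs U hconn hcard
    set R := (U \ S) ∪ {v} with hRdef
    have hvU : v ∈ U := hgood.2.1 hgood.1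
    have hRU : R ⊆ U := by
      rintro z (hz | hz)
      · exact hz.1
      · rw [Set.mem_singleton_iff] at hz; subst hz; exact hvU
    have hReq : R = U \ (S \ {v}) := by
      ext z
      constructor
      · rintro (hz | hz)
        · exact ⟨hz.1, fun h => hz.2 h.1⟩
        · rw [Set.mem_singleton_iff] at hz; subst hz
          exact ⟨hvU, fun h => h.2 rfl⟩
      · rintro ⟨hzU, h⟩
        by_cases hzv : z = v
        · exact Or.inr hzv
        · exact Or.inl ⟨hzU, fun hzS => h ⟨hzS, hzv⟩⟩
    have hSVsub : S \ {v} ⊆ U := fun z hz => hgood.2.1 hz.1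
    have hSVcard : (S \ {v}).ncard = S.ncard - 1 :=
      Set.ncard_diff_singleton_of_mem hgood.1
    have hRcard : R.ncard = U.ncard - (S.ncard - 1) := by
      rw [hReq, Set.ncard_diff hSVsub ((S \ {v}).toFinite), hSVcard]
    have hgs : s ≤ S.ncard := hgood.2.2.2.2
    have hRlt : R.ncard < N := by omega
    have hRge : s ≤ R.ncard := by omega
    have hRconn := R_conn hgood hconn
    obtain ⟨k, H, hc, hd, hu, hsz⟩ := ih R.ncard hRlt R rfl hRge hRconn
    set HS := (⊤ : T.Subgraph).induce S with hHSdef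
    have hSconn' : HS.Connected := induce_conn ⟨v, hgood.1⟩ hgood.2.2.1
    have hsplitE : ((⊤ : T.Subgraph).induce U).edgeSet =
        HS.edgeSet ∪ ((⊤ : T.Subgraph).induce R).edgeSet := by
      ext e
      refine Sym2.ind (fun x y => ?_) e
      simp only [Subgraph.mem_edgeSet, Subgraph.induce_adj, Subgraph.top_adj, Set.mem_union]
      constructor
      · rintro ⟨hxU, hyU, hadj⟩
        rcases edge_split hgood x y hadj hxU hyU with ⟨h1, h2⟩ | ⟨h1, h2⟩
        · exact Or.inl ⟨h1, h2, hadj⟩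
        · exact Or.inr ⟨h1, h2, hadj⟩
      · rintro (⟨h1, h2, hadj⟩ | ⟨h1, h2, hadj⟩)
        · exact ⟨hgood.2.1 h1, hgood.2.1 h2, hadj⟩
        · exact ⟨hRU h1, hRU h2, hadj⟩
    have hdisjE : Disjoint HS.edgeSet ((⊤ : T.Subgraph).induce R).edgeSet := by
      rw [Set.disjoint_left]
      intro e
      refine Sym2.ind (fun x y => ?_) e
      simp only [Subgraph.mem_edgeSet, Subgraph.induce_adj, Subgraph.top_adj]
      rintro ⟨hxS, hyS, hadj⟩ ⟨hxR, hyR, -⟩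
      have hxv : x = v := by
        rcases hxR with h | h
        · exact absurd hxS h.2
        · rwa [Set.mem_singleton_iff] at h
      have hyv : y = v := by
        rcases hyR with h | h
        · exact absurd hyS h.2
        · rwa [Set.mem_singleton_iff] at h
      subst hxv; subst hyv
      exact T.loopless.irrefl _ hadj
    have hHsubR : ∀ i, (H i).edgeSet ⊆ ((⊤ : T.Subgraph).induce R).edgeSet := by
      intro i
      rw [← hu]
      exact Set.subset_iUnion (fun i => (H i).edgeSet) i
    refine ⟨k + 1, Fin.cons HS H, ?_, ?_, ?_, ?_⟩
    · intro i
      refine Fin.cases ?_ (fun i' => ?_) i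
      · simpa using hSconn'
      · simpa using hc i'
    · intro i j
      refine Fin.cases ?_ (fun i' => ?_) i <;> refine Fin.cases ?_ (fun j' => ?_) j <;>
        intro hij
      · exact absurd rfl hij
      · simp only [Fin.cons_zero, Fin.cons_succ]
        exact hdisjE.mono_right (hHsubR j')
      · simp only [Fin.cons_zero, Fin.cons_succ]
        exact (hdisjE.mono_right (hHsubR i')).symm
      · simp only [Fin.cons_succ]
        exact hd i' j' (fun h => hij (by rw [h]))
    · have hcu : (⋃ i, ((Fin.cons HS H : Fin (k + 1) → T.Subgraph) i).edgeSet) =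
          HS.edgeSet ∪ ⋃ i, (H i).edgeSet := by
        ext e
        simp only [Set.mem_iUnion, Set.mem_union]
        constructor
        · rintro ⟨i, hi⟩
          induction i using Fin.cases with
          | zero => exact Or.inl (by simpa using hi)
          | succ i' => exact Or.inr ⟨i', by simpa using hi⟩
        · rintro (h | ⟨i, hi⟩)
          · exact ⟨0, by simpa using h⟩
          · exact ⟨i.succ, by simpa using hi⟩
      rw [hcu, hu, hsplitE]
    · intro i
      refine Fin.cases ?_ (fun i' => ?_) i
      · simp only [Fin.cons_zero, hHSdef, Subgraph.induce_verts]
        exact ⟨hgs, by omega⟩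
      · simpa using hsz i'

end ConnDecomp

/-- Every connected graph on at least `1/ε` vertices (for `0 < ε ≤ 1`) has a spanning
tree whose edge set can be partitioned into connected, edge-disjoint subgraphs, each
with between `1/ε` and `3/ε` vertices. -/
theorem connected_decomposition {V : Type*} [Fintype V]
    (G : SimpleGraph V) (hG : G.Connected)
    (ε : ℝ) (hε0 : 0 < ε) (hε1 : ε ≤ 1)
    (hn : 1 / ε ≤ (Fintype.card V : ℝ)) :
    ∃ T : SimpleGraph V, T ≤ G ∧ T.IsTree ∧
      ∃ (k : ℕ) (H : Fin k → T.Subgraph),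
        (∀ i, (H i).Connected) ∧
        (∀ i j, i ≠ j → Disjoint (H i).edgeSet (H j).edgeSet) ∧
        (⋃ i, (H i).edgeSet) = T.edgeSet ∧
        (∀ i, 1 / ε ≤ ((H i).verts.ncard : ℝ) ∧ ((H i).verts.ncard : ℝ) ≤ 3 / ε) := by
  classical
  obtain ⟨T, hTle, hTtree⟩ := ConnDecomp.exists_tree G hG
  refine ⟨T, hTle, hTtree, ?_⟩
  have hεinv : (1 : ℝ) ≤ 1 / ε := by
    rw [le_div_iff₀ hε0]; linarith
  by_cases hcard1 : Fintype.card V = 1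
  · refine ⟨0, Fin.elim0, fun i => i.elim0, fun i => i.elim0, ?_, fun i => i.elim0⟩
    have hE : T.edgeSet = ∅ := by
      ext e
      refine Sym2.ind (fun x y => ?_) e
      simp only [SimpleGraph.mem_edgeSet, Set.mem_empty_iff_false, iff_false]
      intro hadj
      exact hadj.ne (Fintype.card_le_one_iff.mp (le_of_eq hcard1) x y)
    rw [hE]
    exact Set.iUnion_of_empty _
  · have hpos : 0 < Fintype.card V := Fintype.card_pos_iff.mpr hG.nonempty
    have hcard2 : 2 ≤ Fintype.card V := by omega
    set c := Nat.ceil (1 / ε) with hcdef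
    set s := max 2 c with hsdef
    have hs2 : 2 ≤ s := le_max_left _ _
    have hcn : c ≤ Fintype.card V := Nat.ceil_le.mpr hn
    have hsn : s ≤ Fintype.card V := max_le hcard2 hcn
    have huniv : (Set.univ : Set V).ncard = Fintype.card V := by
      rw [Set.ncard_univ, Nat.card_eq_fintype_card]
    have hres : ConnDecomp.resG T Set.univ = T := by
      ext x y
      simp [ConnDecomp.resG_adj]
    obtain ⟨k, H, h1, h2, h3, h4⟩ :=
      ConnDecomp.main T hTtree.2 s hs2 (Set.univ : Set V).ncard Set.univ rfl
        (by rw [huniv]; exact hsn)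
        (by
          rw [hres]
          exact fun a _ b _ => hTtree.1.preconnected a b)
    have hEuniv : ((⊤ : T.Subgraph).induce (Set.univ : Set V)).edgeSet = T.edgeSet := by
      ext e
      refine Sym2.ind (fun x y => ?_) e
      simp [SimpleGraph.Subgraph.mem_edgeSet, SimpleGraph.Subgraph.induce_adj]
    refine ⟨k, H, h1, h2, by rw [h3, hEuniv], ?_⟩
    intro i
    obtain ⟨hlo, hhi⟩ := h4 i
    constructor
    · calc (1 : ℝ) / ε ≤ (c : ℝ) := Nat.le_ceil _
        _ ≤ (s : ℝ) := by exact_mod_cast Nat.cast_le.mpr (le_max_right 2 c)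
        _ ≤ ((H i).verts.ncard : ℝ) := by exact_mod_cast hlo
    · have hcast : ((3 * s - 3 : ℕ) : ℝ) = 3 * (s : ℝ) - 3 := by
        have : 3 ≤ 3 * s := by omega
        push_cast [Nat.cast_sub this]
        ring
      have h1' : ((H i).verts.ncard : ℝ) ≤ 3 * (s : ℝ) - 3 := by
        rw [← hcast]
        exact_mod_cast hhi
      have h3eps : 3 / ε = 3 * (1 / ε) := by ring
      by_cases hc2 : 2 ≤ c
      · have hseq : s = c := max_eq_right hc2
        have hclt : (c : ℝ) < 1 / ε + 1 :=
          Nat.ceil_lt_add_one (by linarith : (0 : ℝ) ≤ 1 / ε)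
        rw [hseq] at h1'
        rw [h3eps]
        linarith
      · have hseq : s = 2 := max_eq_left (by omega)
        rw [hseq] at h1'
        rw [h3eps]
        have h22 : ((2 : ℕ) : ℝ) = 2 := by norm_num
        rw [h22] at h1'
        linarith
end
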